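/- Let G be a word in the matrices P = [[1,1],[1,0]] and M = [[0,1],[1,1]] with PGP = [[α, β'],[β, α']], and let N = p + m where p and m are the total degrees of PGP in P and M respectively. Then β' is the unique integer with 0 < β' < α and ββ' ≡ (-1)^{N-1} (mod α). -/

import Mathlib

/-- The matrix `P = [[1,1],[1,0]]`. -/
def Pm : Matrix (Fin 2) (Fin 2) ℤ := !![1, 1; 1, 0]

/-- The matrix `M = [[0,1],[1,1]]`. -/
def Mm : Matrix (Fin 2) (Fin 2) ℤ := !![0, 1; 1, 1]

/-- A letter of a word in `P` and `M`. -/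
def toMat (b : Bool) : Matrix (Fin 2) (Fin 2) ℤ := if b then Pm else Mm

/-- The product of a word in `P` and `M`. -/
def wordProd (w : List Bool) : Matrix (Fin 2) (Fin 2) ℤ := (w.map toMat).prod

/-!
Since `det P = det M = -1`, the matrix `PGP = [[α, β'], [β, α']]` has determinant `(-1)^N`, so
`α α' - β' β = (-1)^N`. Reading this modulo `α` gives the congruence `β β' ≡ (-1)^(N-1)`, and
shows that `β` is invertible modulo `α`, which makes the residue `β'` unique in `(0, α)`.
Finally `P G` has a positive first row `(a, b)` (multiplying on the right by `P` or `M` keeps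
it positive), and `PGP = (P G) P` has first row `(a + b, a)`, whence `0 < β' < α`.
-/

namespace Int

theorem eq_of_mul_modEq_of_isCoprime {a b x y : ℤ} (hab : IsCoprime a b)
    (h : b * x ≡ b * y [ZMOD a]) (hx₀ : 0 ≤ x) (hxa : x < a) (hy₀ : 0 ≤ y) (hya : y < a) :
    x = y := by
  have hdvd : a ∣ y - x := hab.dvd_of_dvd_mul_left (by simpa only [mul_sub] using h.dvd)
  have hlt : |y - x| < a := abs_sub_lt_iff.mpr ⟨by linarith, by linarith⟩
  exact (sub_eq_zero.mp (eq_zero_of_abs_lt_dvd hdvd hlt)).symm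

end Int

namespace Matrix

theorem mul_apply_one_zero_modEq_neg_det (A : Matrix (Fin 2) (Fin 2) ℤ) :
    A 1 0 * A 0 1 ≡ -A.det [ZMOD A 0 0] :=
  (Int.modEq_iff_dvd.mpr ⟨A 1 1, by rw [det_fin_two]; ring⟩).symm

theorem isCoprime_apply_zero_zero_one_zero {A : Matrix (Fin 2) (Fin 2) ℤ} (hA : IsUnit A.det) :
    IsCoprime (A 0 0) (A 1 0) := by
  obtain ⟨u, hu⟩ := hA
  refine ⟨↑u⁻¹ * A 1 1, -(↑u⁻¹ * A 0 1), ?_⟩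
  rw [det_fin_two] at hu
  linear_combination (↑u⁻¹ : ℤ) * hu.symm + u.inv_mul

end Matrix

theorem det_toMat (b : Bool) : (toMat b).det = -1 := by
  cases b <;> simp [toMat, Pm, Mm, Matrix.det_fin_two_of]

theorem det_wordProd (w : List Bool) : (wordProd w).det = (-1) ^ w.length := by
  induction w with
  | nil => simp [wordProd]
  | cons b w ih =>
    rw [wordProd, List.map_cons, List.prod_cons, Matrix.det_mul, det_toMat, ← wordProd, ih,
      List.length_cons, pow_succ']

theorem pos_row_zero_mul_toMat {B : Matrix (Fin 2) (Fin 2) ℤ} (h₀ : 0 < B 0 0) (h₁ : 0 < B 0 1)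
    (b : Bool) : 0 < (B * toMat b) 0 0 ∧ 0 < (B * toMat b) 0 1 := by
  cases b <;> simp [toMat, Pm, Mm, Matrix.mul_apply, Fin.sum_univ_two] <;> omega

theorem pos_row_zero_Pm_mul_wordProd (w : List Bool) :
    0 < (Pm * wordProd w) 0 0 ∧ 0 < (Pm * wordProd w) 0 1 := by
  induction w using List.reverseRecOn with
  | nil => simp [wordProd, Pm]
  | append_singleton w b ih =>
    rw [wordProd, List.map_append, List.prod_append, ← wordProd, ← Matrix.mul_assoc]
    simpa using pos_row_zero_mul_toMat ih.1 ih.2 b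

theorem mul_Pm_apply_zero_zero (B : Matrix (Fin 2) (Fin 2) ℤ) :
    (B * Pm) 0 0 = B 0 0 + B 0 1 := by
  simp [Matrix.mul_apply, Fin.sum_univ_two, Pm]

theorem mul_Pm_apply_zero_one (B : Matrix (Fin 2) (Fin 2) ℤ) : (B * Pm) 0 1 = B 0 0 := by
  simp [Matrix.mul_apply, Fin.sum_univ_two, Pm]

theorem det_Pm_mul_wordProd_mul_Pm (w : List Bool) :
    (Pm * wordProd w * Pm).det = (-1) ^ w.length := by
  rw [Matrix.det_mul, Matrix.det_mul, det_wordProd, show Pm = toMat true from rfl, det_toMat]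
  ring

/-- If `PGP = [[α, β'],[β, α']]` with `N` matrix factors, then `β'` is the unique
integer with `0 < β' < α` and `β β' ≡ (-1)^(N-1) (mod α)`. -/
theorem PGP_beta_prime (w : List Bool) :
    (0 < (Pm * wordProd w * Pm) 0 1 ∧
      (Pm * wordProd w * Pm) 0 1 < (Pm * wordProd w * Pm) 0 0 ∧
      (Pm * wordProd w * Pm) 1 0 * (Pm * wordProd w * Pm) 0 1 ≡
        (-1 : ℤ) ^ (w.length + 2 - 1) [ZMOD (Pm * wordProd w * Pm) 0 0]) ∧
    ∀ x : ℤ, 0 < x → x < (Pm * wordProd w * Pm) 0 0 →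
      (Pm * wordProd w * Pm) 1 0 * x ≡
        (-1 : ℤ) ^ (w.length + 2 - 1) [ZMOD (Pm * wordProd w * Pm) 0 0] →
      x = (Pm * wordProd w * Pm) 0 1 := by
  have hdet := det_Pm_mul_wordProd_mul_Pm w
  have hcong := (Pm * wordProd w * Pm).mul_apply_one_zero_modEq_neg_det
  rw [hdet, ← neg_one_mul, ← pow_succ'] at hcong
  have hcop := Matrix.isCoprime_apply_zero_zero_one_zero (hdet ▸ (isUnit_neg_one.pow _))
  obtain ⟨ha, hb⟩ := pos_row_zero_Pm_mul_wordProd w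
  have hβ' := mul_Pm_apply_zero_one (Pm * wordProd w)
  have hα := mul_Pm_apply_zero_zero (Pm * wordProd w)
  have hβ'α : (Pm * wordProd w * Pm) 0 1 < (Pm * wordProd w * Pm) 0 0 := by omega
  refine ⟨⟨hβ' ▸ ha, hβ'α, hcong⟩, fun x hx₀ hxα hx => ?_⟩
  exact Int.eq_of_mul_modEq_of_isCoprime hcop (hx.trans hcong.symm) hx₀.le hxα
    (hβ' ▸ ha.le) hβ'α
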